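/- Let (X,d) be a complete metric space and T : X → X a mapping satisfying F(d(Tx,Ty)) ≤ E(d(x,y)) for all x,y ∈ X with Tx ≠ Ty, where the functions F, E : (0,∞) → ℝ satisfy: (p1) F is nondecreasing; (p2) E(t) < F(t) for all t > 0; (p3) for every ε > 0 and every sequence (t_n) ⊂ (ε,∞) with t_n → ε, liminf_n E(t_n) < F(ε+0), where F(ε+0) is the right-hand limit of F at ε. Then T is a CJMP-contraction, hence a Picard operator. -/

import Mathlib

/-!
Comparing `F (d(Tx,Ty)) ≤ E (d(x,y)) < F (d(x,y))` through the monotonicity of `F` shows that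
`T` is contractive. If the Matkowski–Węgrzyk condition failed at `ε`, there would be pairs with
`d(x,y) ↓ ε` and `d(Tx,Ty) > ε`, whence `E (d(x,y)) ≥ F (d(Tx,Ty)) ≥ F(ε+0)` along this sequence,
against (p3). For a CJMP-contraction the steps `d(Tⁿx, Tⁿ⁺¹x)` decrease to `0`, the orbit is
Cauchy, and its limit is a fixed point, unique since `T` is contractive.
-/

open Filter Topology

/-- `T` is a Picard operator: it has a unique fixed point `u` and every
sequence of iterates converges to `u`. -/
def IsPicardOperator {X : Type*} [MetricSpace X] (T : X → X) : Prop :=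
  ∃ u : X, T u = u ∧ (∀ v : X, T v = v → v = u) ∧
    ∀ x : X, Tendsto (fun n => T^[n] x) atTop (𝓝 u)

/-- `T` is contractive: `d(Tx,Ty) < d(x,y)` whenever `x ≠ y`. -/
def Contractive {X : Type*} [MetricSpace X] (T : X → X) : Prop :=
  ∀ x y : X, x ≠ y → dist (T x) (T y) < dist x y

/-- The Matkowski–Węgrzyk condition. -/
def MWCondition {X : Type*} [MetricSpace X] (T : X → X) : Prop :=
  ∀ ε > (0 : ℝ), ∃ δ > (0 : ℝ), ∀ x y : X,
    ε < dist x y → dist x y < ε + δ → dist (T x) (T y) ≤ ε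

/-- `T` is a CJMP-contraction. -/
def IsCJMP {X : Type*} [MetricSpace X] (T : X → X) : Prop :=
  Contractive T ∧ MWCondition T

open Set Function

section

variable {X : Type*} [MetricSpace X] {T : X → X}

namespace Contractive

lemma dist_le (hT : Contractive T) (x y : X) : dist (T x) (T y) ≤ dist x y := by
  rcases eq_or_ne x y with rfl | hne
  · simp
  · exact (hT x y hne).le

lemma lipschitzWith_one (hT : Contractive T) : LipschitzWith 1 T :=
  LipschitzWith.of_dist_le_mul fun x y => by simpa using hT.dist_le x y

lemma eq_of_isFixedPt (hT : Contractive T) {u v : X} (hu : IsFixedPt T u)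
    (hv : IsFixedPt T v) : u = v := by
  by_contra hne
  simpa [hu.eq, hv.eq] using hT u v hne

lemma antitone_dist_iterate_succ (hT : Contractive T) (x : X) :
    Antitone fun n => dist (T^[n] x) (T^[n + 1] x) :=
  antitone_nat_of_succ_le fun n => by
    simpa only [iterate_succ_apply'] using hT.dist_le (T^[n] x) (T^[n + 1] x)

end Contractive

namespace IsCJMP

lemma exists_pos_forall_dist_le (hT : IsCJMP T) {ε : ℝ} (hε : 0 < ε) :
    ∃ δ > 0, ∀ x y : X, dist x y < ε + δ → dist (T x) (T y) ≤ ε := by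
  obtain ⟨δ, hδ, hMW⟩ := hT.2 ε hε
  refine ⟨δ, hδ, fun x y hxy => ?_⟩
  rcases le_or_gt (dist x y) ε with hle | hgt
  · exact (hT.1.dist_le x y).trans hle
  · exact hMW x y hgt hxy

lemma tendsto_dist_iterate_succ (hT : IsCJMP T) (x : X) :
    Tendsto (fun n => dist (T^[n] x) (T^[n + 1] x)) atTop (𝓝 0) := by
  set d := fun n => dist (T^[n] x) (T^[n + 1] x)
  have hanti : Antitone d := hT.1.antitone_dist_iterate_succ x
  have hbdd : BddBelow (range d) := ⟨0, by rintro _ ⟨n, rfl⟩; exact dist_nonneg⟩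
  have hlim := tendsto_atTop_ciInf hanti hbdd
  set ε := ⨅ n, d n
  suffices ε = 0 by rwa [this] at hlim
  by_contra hne
  have hε : 0 < ε := (le_ciInf fun n => dist_nonneg).lt_of_ne' hne
  have hstep : ∀ n, d (n + 1) < d n := fun n => by
    have hne : T^[n] x ≠ T^[n + 1] x := dist_pos.1 (hε.trans_le (ciInf_le hbdd n))
    simpa only [d, iterate_succ_apply'] using hT.1 _ _ hne
  -- Every step is strictly above the infimum, yet some step is within `δ` of it.
  obtain ⟨δ, hδ, hle⟩ := hT.exists_pos_forall_dist_le hε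
  obtain ⟨N, hN⟩ := (hlim.eventually (gt_mem_nhds (lt_add_of_pos_right ε hδ))).exists
  have hN1 : d (N + 1) ≤ ε := by
    simpa only [d, iterate_succ_apply'] using hle _ _ hN
  exact (ciInf_le hbdd (N + 2)).not_gt ((hstep (N + 1)).trans_le hN1)

lemma cauchySeq_iterate (hT : IsCJMP T) (x : X) : CauchySeq fun n => T^[n] x := by
  rw [Metric.cauchySeq_iff']
  intro ε hε
  obtain ⟨δ, hδ, hle⟩ := hT.exists_pos_forall_dist_le (half_pos hε)
  set η := min δ (ε / 2)
  have hη : 0 < η := lt_min hδ (half_pos hε)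
  obtain ⟨N, hN⟩ := ((hT.tendsto_dist_iterate_succ x).eventually (gt_mem_nhds hη)).exists
  have hball : ∀ k, dist (T^[N] x) (T^[N + k] x) < ε / 2 + η := by
    intro k
    induction k with
    | zero => simpa using add_pos (half_pos hε) hη
    | succ k ih =>
      have hTk : dist (T (T^[N] x)) (T (T^[N + k] x)) ≤ ε / 2 :=
        hle _ _ (ih.trans_le (by gcongr; exact min_le_left _ _))
      calc dist (T^[N] x) (T^[N + (k + 1)] x)
          ≤ dist (T^[N] x) (T^[N + 1] x) + dist (T^[N + 1] x) (T^[N + k + 1] x) :=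
            dist_triangle _ _ _
        _ < η + ε / 2 :=
            add_lt_add_of_lt_of_le hN (by simpa only [iterate_succ_apply'] using hTk)
        _ = ε / 2 + η := add_comm _ _
  refine ⟨N, fun n hn => ?_⟩
  obtain ⟨k, rfl⟩ := Nat.exists_eq_add_of_le hn
  calc dist (T^[N + k] x) (T^[N] x) = dist (T^[N] x) (T^[N + k] x) := dist_comm _ _
    _ < ε / 2 + η := hball k
    _ ≤ ε := by linarith [min_le_right δ (ε / 2)]

lemma exists_isFixedPt_tendsto_iterate [CompleteSpace X] (hT : IsCJMP T) (x : X) :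
    ∃ u, IsFixedPt T u ∧ Tendsto (fun n => T^[n] x) atTop (𝓝 u) := by
  obtain ⟨u, hu⟩ := cauchySeq_tendsto_of_complete (hT.cauchySeq_iterate x)
  exact ⟨u, isFixedPt_of_tendsto_iterate hu hT.1.lipschitzWith_one.continuous.continuousAt, hu⟩

theorem isPicardOperator [CompleteSpace X] [Nonempty X] (hT : IsCJMP T) :
    IsPicardOperator T := by
  obtain ⟨u, hu, -⟩ := hT.exists_isFixedPt_tendsto_iterate (Classical.arbitrary X)
  refine ⟨u, hu, fun v hv => hT.1.eq_of_isFixedPt hv hu, fun x => ?_⟩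
  obtain ⟨w, hw, hlim⟩ := hT.exists_isFixedPt_tendsto_iterate x
  rwa [hT.1.eq_of_isFixedPt hw hu] at hlim

end IsCJMP

def IsFEContraction (F E : ℝ → ℝ) (T : X → X) : Prop :=
  ∀ x y : X, T x ≠ T y → F (dist (T x) (T y)) ≤ E (dist x y)

namespace IsFEContraction

variable {E F : ℝ → ℝ}

lemma contractive (hT : IsFEContraction F E T) (hF : MonotoneOn F (Ioi 0))
    (hEF : ∀ t > (0 : ℝ), E t < F t) : Contractive T := by
  intro x y hne
  have hxy : 0 < dist x y := dist_pos.2 hne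
  rcases eq_or_ne (T x) (T y) with heq | hTne
  · simpa [heq] using hxy
  · by_contra! hge
    have hmono := hF (mem_Ioi.2 hxy) (mem_Ioi.2 (dist_pos.2 hTne)) hge
    linarith [hT x y hTne, hEF _ hxy]

lemma mwCondition (hT : IsFEContraction F E T) (hF : MonotoneOn F (Ioi 0))
    (hEF : ∀ t > (0 : ℝ), E t < F t)
    (hliminf : ∀ ε > (0 : ℝ), ∀ tn : ℕ → ℝ, (∀ n, ε < tn n) → Tendsto tn atTop (𝓝 ε) →
      ∀ L : ℝ, Tendsto F (𝓝[>] ε) (𝓝 L) → liminf (fun n => E (tn n)) atTop < L) :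
    MWCondition T := by
  intro ε hε
  by_contra! hfail
  have hFε : MonotoneOn F (Ioi ε) := hF.mono fun s hs => hε.trans hs
  have hbdd : BddBelow (F '' Ioi ε) := ⟨F ε, by
    rintro _ ⟨s, hs, rfl⟩
    exact hF (mem_Ioi.2 hε) (mem_Ioi.2 (hε.trans hs)) (le_of_lt hs)⟩
  set L := sInf (F '' Ioi ε)
  have hfreq : ∃ᶠ t in 𝓝[>] ε, ε < t ∧ L ≤ E t := by
    rw [(nhdsGT_basis ε).frequently_iff]
    intro b hb
    obtain ⟨x, y, h₁, h₂, h₃⟩ := hfail (b - ε) (by linarith)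
    have hTne : T x ≠ T y := dist_pos.1 (hε.trans h₃)
    exact ⟨dist x y, ⟨h₁, by linarith⟩, h₁,
      (csInf_le hbdd ⟨_, h₃, rfl⟩).trans (hT x y hTne)⟩
  obtain ⟨t, ht, hQ⟩ := exists_seq_forall_of_frequently hfreq
  have hgt n : ε < t n := (hQ n).1
  have htε : Tendsto t atTop (𝓝 ε) := tendsto_nhds_of_tendsto_nhdsWithin ht
  -- `E (t n) < F (t n) ≤ F (ε + 1)` eventually, so the `liminf` is not a junk value.
  have hEbdd : ∀ᶠ n in atTop, E (t n) ≤ F (ε + 1) := by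
    filter_upwards [htε.eventually (gt_mem_nhds (lt_add_one ε))] with n hn
    have htpos : 0 < t n := hε.trans (hgt n)
    exact (hEF _ htpos).le.trans (hF (mem_Ioi.2 htpos) (mem_Ioi.2 (by linarith)) hn.le)
  have hle : L ≤ liminf (fun n => E (t n)) atTop :=
    le_liminf_of_le (isCoboundedUnder_ge_of_eventually_le atTop hEbdd)
      (Eventually.of_forall fun n => (hQ n).2)
  exact hle.not_gt (hliminf ε hε t hgt htε L (hFε.tendsto_nhdsGT hbdd))

end IsFEContraction

end

theorem stmt_18 {X : Type*} [MetricSpace X] [CompleteSpace X] [Nonempty X] (T : X → X)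
    (E F : ℝ → ℝ)
    (hp1 : MonotoneOn F (Set.Ioi 0))
    (hp2 : ∀ t > (0 : ℝ), E t < F t)
    (hp3 : ∀ ε > (0 : ℝ), ∀ tn : ℕ → ℝ, (∀ n, ε < tn n) → Tendsto tn atTop (𝓝 ε) →
      ∀ L : ℝ, Tendsto F (𝓝[>] ε) (𝓝 L) → liminf (fun n => E (tn n)) atTop < L)
    (hcontr : ∀ x y : X, T x ≠ T y → F (dist (T x) (T y)) ≤ E (dist x y)) :
    IsCJMP T ∧ IsPicardOperator T := by
  have hFE : IsFEContraction F E T := hcontr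
  have hT : IsCJMP T := ⟨hFE.contractive hp1 hp2, hFE.mwCondition hp1 hp2 hp3⟩
  exact ⟨hT, hT.isPicardOperator⟩
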